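/- arXiv:1712.07724 — 2 statements merged into one kernel-verified Lean document; each statement's English description precedes it below -/
import Mathlib

section
/- Assume ZF and that 𝒞_{ω₁} is a normal filter on ω₁. If 𝒞_{ω₁} is an ultrafilter on ω₁, then for every sequence (X_δ : δ ∈ Lim(ω₁)) with X_δ ⊆ δ for each δ, there is a club C ⊆ ω₁ such that either C ∩ δ ⊆ X_δ for every δ ∈ C, or C ∩ X_δ = ∅ for every δ ∈ C. -/
noncomputable def omega1 : Ordinal.{0} := (Cardinal.aleph 1).ord

def IsClubOmega1 (C : Set Ordinal) : Prop :=
  C ⊆ Set.Iio omega1 ∧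
    (∀ δ, δ < omega1 → δ ≠ 0 → sSup (C ∩ Set.Iio δ) = δ → δ ∈ C) ∧
    ∀ α, α < omega1 → ∃ β ∈ C, α < β

/-- The collection `𝒞_{ω₁}` of subsets of `ω₁` containing a club. -/
def ClubFilter : Set (Set Ordinal) :=
  {X | ∃ C, IsClubOmega1 C ∧ C ⊆ X}

/-- Normality of `𝒞_{ω₁}`: closure under diagonal intersections. -/
def ClubFilterNormal : Prop :=
  ∀ W : Ordinal → Set Ordinal, (∀ α, α < omega1 → W α ∈ ClubFilter) →
    {δ | δ < omega1 ∧ ∀ α < δ, δ ∈ W α} ∈ ClubFilter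

/-!
For each `α` the ultrafilter decides whether `{δ | α ∈ X δ}` or its complement contains a club,
and normality makes these decisions hold simultaneously along a diagonal intersection `D`. The
ultrafilter then also decides whether the set `A` of `α` of the first kind contains a club; a club
inside `A ∩ D` or inside `(ω₁ \ A) ∩ D` is homogeneous for the relation `α ∈ X δ` on its pairs
`α < δ`.
-/

lemma one_lt_omega1 : (1 : Ordinal) < omega1 := by
  rw [omega1, Cardinal.lt_ord, Ordinal.card_one]
  exact Cardinal.one_lt_aleph0.trans_le (Cardinal.aleph0_le_aleph 1)

lemma IsClubOmega1.inter_Ioi {C : Set Ordinal} (hC : IsClubOmega1 C) {γ : Ordinal}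
    (hγ : γ < omega1) : IsClubOmega1 (C ∩ Set.Ioi γ) := by
  obtain ⟨hsub, hclosed, hunb⟩ := hC
  refine ⟨fun x hx => hsub hx.1, ?_, ?_⟩
  · intro δ hδ hδ0 hsup
    have hbdd : BddAbove (C ∩ Set.Ioi γ ∩ Set.Iio δ) := ⟨δ, fun b hb => hb.2.le⟩
    obtain ⟨x, hx⟩ : (C ∩ Set.Ioi γ ∩ Set.Iio δ).Nonempty := by
      refine Set.nonempty_iff_ne_empty.2 fun h => hδ0 ?_
      rw [← hsup, h, csSup_empty, Ordinal.bot_eq_zero]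
    refine ⟨hclosed δ hδ hδ0 (le_antisymm (csSup_le' fun b hb => hb.2.le) ?_), ?_⟩
    · exact hsup.symm.le.trans <| csSup_le_csSup ⟨δ, fun b hb => hb.2.le⟩ ⟨x, hx⟩
        fun b hb => ⟨hb.1.1, hb.2⟩
    · exact hx.1.2.trans_le ((le_csSup hbdd hx).trans hsup.le)
  · intro α hα
    obtain ⟨β, hβC, hβ⟩ := hunb (max α γ) (max_lt hα hγ)
    exact ⟨β, ⟨hβC, (le_max_right α γ).trans_lt hβ⟩, (le_max_left α γ).trans_lt hβ⟩

lemma mem_clubFilter_of_superset {T U : Set Ordinal} (hT : T ∈ ClubFilter) (hTU : T ⊆ U) :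
    U ∈ ClubFilter :=
  let ⟨C, hC, hCT⟩ := hT
  ⟨C, hC, hCT.trans hTU⟩

/- Taken from normality, so that the regularity of `ω₁` (which needs countable choice) is not
used: the diagonal intersection of `T, U, U, …` lies in `T ∩ U` above `1`. -/
lemma inter_mem_clubFilter (hnormal : ClubFilterNormal) {T U : Set Ordinal}
    (hT : T ∈ ClubFilter) (hU : U ∈ ClubFilter) : T ∩ U ∈ ClubFilter := by
  obtain ⟨C, hC, hCsub⟩ := hnormal (fun α => if α = 0 then T else U) fun α _ => by
    split_ifs
    exacts [hT, hU]
  refine ⟨C ∩ Set.Ioi 1, hC.inter_Ioi one_lt_omega1, ?_⟩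
  rintro δ ⟨hδC, hδ1⟩
  have hδW := (hCsub hδC).2
  have hδT := hδW 0 (zero_lt_one.trans hδ1)
  have hδU := hδW 1 hδ1
  simp only [↓reduceIte, one_ne_zero] at hδT hδU
  exact ⟨hδT, hδU⟩

lemma diagonal_decided_mem_clubFilter (hnormal : ClubFilterNormal)
    (hultra : ∀ S : Set Ordinal, S ⊆ Set.Iio omega1 →
      S ∈ ClubFilter ∨ (Set.Iio omega1 \ S) ∈ ClubFilter)
    (S : Ordinal → Set Ordinal)
    (hS : ∀ α, S α ⊆ Set.Iio omega1) :
    {δ | δ < omega1 ∧ ∀ α < δ, (δ ∈ S α ↔ S α ∈ ClubFilter)} ∈ ClubFilter := by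
  refine hnormal (fun α => {δ | δ ∈ S α ↔ S α ∈ ClubFilter}) fun α _ => ?_
  by_cases hα : S α ∈ ClubFilter
  · exact mem_clubFilter_of_superset hα fun δ hδ => iff_of_true hδ hα
  · exact mem_clubFilter_of_superset ((hultra (S α) (hS α)).resolve_left hα)
      fun δ hδ => iff_of_false hδ.2 hα

theorem exists_club_homogeneous (hnormal : ClubFilterNormal)
    (hultra : ∀ S : Set Ordinal, S ⊆ Set.Iio omega1 →
      S ∈ ClubFilter ∨ (Set.Iio omega1 \ S) ∈ ClubFilter)
    (R : Ordinal → Ordinal → Prop) :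
    ∃ C, IsClubOmega1 C ∧
      ((∀ α ∈ C, ∀ δ ∈ C, α < δ → R α δ) ∨ (∀ α ∈ C, ∀ δ ∈ C, α < δ → ¬ R α δ)) := by
  set S : Ordinal → Set Ordinal := fun α => {δ | δ < omega1 ∧ R α δ}
  have hD := diagonal_decided_mem_clubFilter hnormal hultra S fun α δ hδ => hδ.1
  set A : Set Ordinal := {α | α < omega1 ∧ S α ∈ ClubFilter}
  rcases hultra A fun α hα => hα.1 with hA | hA
  · obtain ⟨C, hC, hCsub⟩ := inter_mem_clubFilter hnormal hA hD
    refine ⟨C, hC, Or.inl fun α hαC δ hδC hαδ => ?_⟩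
    have hδS := ((hCsub hδC).2.2 α hαδ).2 (hCsub hαC).1.2
    exact hδS.2
  · obtain ⟨C, hC, hCsub⟩ := inter_mem_clubFilter hnormal hA hD
    refine ⟨C, hC, Or.inr fun α hαC δ hδC hαδ hR => ?_⟩
    have hδD := (hCsub hδC).2
    have hSα : S α ∈ ClubFilter := (hδD.2 α hαδ).1 ⟨hδD.1, hR⟩
    exact (hCsub hαC).1.2 ⟨hC.1 hαC, hSα⟩

theorem stmt6 (hnormal : ClubFilterNormal)
    (hultra : ∀ S : Set Ordinal, S ⊆ Set.Iio omega1 →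
      S ∈ ClubFilter ∨ (Set.Iio omega1 \ S) ∈ ClubFilter)
    (X : Ordinal → Set Ordinal)
    (hX : ∀ δ, δ < omega1 → Order.IsSuccLimit δ → X δ ⊆ Set.Iio δ) :
    ∃ C, IsClubOmega1 C ∧
      ((∀ δ ∈ C, Order.IsSuccLimit δ → C ∩ Set.Iio δ ⊆ X δ) ∨
        (∀ δ ∈ C, Order.IsSuccLimit δ → C ∩ X δ = ∅)) := by
  obtain ⟨C, hC, hhom | hhom⟩ := exists_club_homogeneous hnormal hultra fun α δ => α ∈ X δ
  · exact ⟨C, hC, Or.inl fun δ hδC _ α ⟨hαC, hαδ⟩ => hhom α hαC δ hδC hαδ⟩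
  · refine ⟨C, hC, Or.inr fun δ hδC hδ => Set.eq_empty_of_forall_notMem ?_⟩
    rintro α ⟨hαC, hαX⟩
    exact hhom α hαC δ hδC (hX δ (hC.1 hδC) hδ hαX) hαX
end

section
/- Measuring is equivalent to its countable-family version: Measuring holds if and only if for every sequence (𝒞_δ : δ ∈ Lim(ω₁)) where each 𝒞_δ is a countable collection of closed subsets of δ, there is a club C ⊆ ω₁ such that for every δ ∈ C and every D ∈ 𝒞_δ there is α < δ with either (C ∩ δ) \ α ⊆ D or ((C ∩ δ) \ α) ∩ D = ∅. -/
def IsClub' (C : Set Ordinal) : Prop :=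
  C ⊆ Set.Iio omega1 ∧
    (∀ δ, δ < omega1 → δ ≠ 0 → sSup (C ∩ Set.Iio δ) = δ → δ ∈ C) ∧
    ∀ α, α < omega1 → ∃ β ∈ C, α < β

/-- `D` is closed (in the order topology) as a subset of `β`. -/
def IsClosedIn (D : Set Ordinal) (β : Ordinal) : Prop :=
  ∀ δ, δ < β → δ ≠ 0 → sSup (D ∩ Set.Iio δ) = δ → δ ∈ D

/-- The principle Measuring. -/
def Measuring : Prop :=
  ∀ A : Ordinal → Set Ordinal,
    (∀ δ, δ < omega1 → Order.IsSuccLimit δ → A δ ⊆ Set.Iio δ ∧ IsClosedIn (A δ) δ) →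
    ∃ C, IsClub' C ∧ ∀ δ ∈ C, Order.IsSuccLimit δ →
      ∃ α < δ, ((C ∩ Set.Iio δ) \ Set.Iio α ⊆ A δ ∨
        ((C ∩ Set.Iio δ) \ Set.Iio α) ∩ A δ = ∅)

/-- The countable-family version of Measuring. -/
def MeasuringCtble : Prop :=
  ∀ 𝒜 : Ordinal → Set (Set Ordinal),
    (∀ δ, δ < omega1 → Order.IsSuccLimit δ →
      (𝒜 δ).Countable ∧ ∀ D ∈ 𝒜 δ, D ⊆ Set.Iio δ ∧ IsClosedIn D δ) →
    ∃ C, IsClub' C ∧ ∀ δ ∈ C, Order.IsSuccLimit δ → ∀ D ∈ 𝒜 δ,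
      ∃ α < δ, ((C ∩ Set.Iio δ) \ Set.Iio α ⊆ D ∨
        ((C ∩ Set.Iio δ) \ Set.Iio α) ∩ D = ∅)

/-! Measuring a set is inherited by subsets of a club, so enumerating each countable family and
intersecting the clubs given by Measuring for the `n`-th members reduces the countable version to
the fact that a countable intersection of clubs is a club. That is the usual closing-off
argument: iterate ω times the supremum of the next elements of all the clubs, which stays below
`ω₁` because `ω₁` has uncountable cofinality. -/

open Set

def Measures (C D : Set Ordinal) (δ : Ordinal) : Prop :=
  ∃ α < δ, ((C ∩ Iio δ) \ Iio α ⊆ D ∨ ((C ∩ Iio δ) \ Iio α) ∩ D = ∅)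

lemma Measures.mono {C C' D : Set Ordinal} {δ : Ordinal} (h : Measures C D δ) (hC : C' ⊆ C) :
    Measures C' D δ := by
  obtain ⟨α, hα, hsub | hdisj⟩ := h
  · exact ⟨α, hα, Or.inl (subset_trans (by gcongr) hsub)⟩
  · exact ⟨α, hα, Or.inr (subset_empty_iff.1 (hdisj ▸ by gcongr))⟩

lemma isClosedIn_empty (β : Ordinal) : IsClosedIn ∅ β := by
  intro δ _ hδ hsup
  exact hδ (by simpa using hsup.symm)

lemma iSup_nat_lt_omega1 {f : ℕ → Ordinal} (hf : ∀ n, f n < omega1) : ⨆ n, f n < omega1 := by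
  refine Ordinal.iSup_lt_of_lt_cof ?_ hf
  rw [Cardinal.mk_nat, omega1, Cardinal.isRegular_aleph_one.cof_ord]
  exact Cardinal.aleph0_lt_aleph_one

lemma sSup_inter_Iio_mono {C C' : Set Ordinal} {δ : Ordinal} (hC : C ⊆ C')
    (h : sSup (C ∩ Iio δ) = δ) : sSup (C' ∩ Iio δ) = δ :=
  le_antisymm (csSup_le' fun _ hx => hx.2.le)
    (h.ge.trans (csSup_le_csSup' ⟨δ, fun _ hx => hx.2.le⟩ (inter_subset_inter_left _ hC)))

lemma sSup_inter_Iio_eq_of_cofinal {C : Set Ordinal} {δ : Ordinal}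
    (h : ∀ γ < δ, ∃ β ∈ C, γ < β ∧ β < δ) : sSup (C ∩ Iio δ) = δ := by
  refine le_antisymm (csSup_le' fun _ hx => hx.2.le) (not_lt.1 fun hlt => ?_)
  obtain ⟨β, hβC, hβ, hβδ⟩ := h _ hlt
  exact hβ.not_ge (le_csSup ⟨δ, fun _ hx => hx.2.le⟩ ⟨hβC, hβδ⟩)

lemma IsClub'.exists_next {C : Set Ordinal} (hC : IsClub' C) :
    ∃ e : Ordinal → Ordinal, ∀ γ < omega1, e γ ∈ C ∧ γ < e γ := by
  choose e he using fun γ : Ordinal => (em (γ < omega1)).elim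
    (fun h => (hC.2.2 γ h).imp fun _ hβ _ => hβ) fun h => ⟨0, fun h' => absurd h' h⟩
  exact ⟨e, he⟩

lemma IsClub'.exists_mem_iInter_gt {C : ℕ → Set Ordinal} (hC : ∀ n, IsClub' (C n))
    {α : Ordinal} (hα : α < omega1) : ∃ δ ∈ ⋂ n, C n, α < δ := by
  choose e he using fun n => (hC n).exists_next
  set s : ℕ → Ordinal := fun k => (fun γ => ⨆ n, e n γ)^[k] α
  have hs_succ (k : ℕ) : s (k + 1) = ⨆ n, e n (s k) := Function.iterate_succ_apply' _ _ _
  have hs_lt (k : ℕ) : s k < omega1 := by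
    induction k with
    | zero => exact hα
    | succ k ih => exact hs_succ k ▸ iSup_nat_lt_omega1 fun n => (hC n).1 (he n _ ih).1
  have he_le (n k : ℕ) : e n (s k) ≤ s (k + 1) :=
    hs_succ k ▸ le_ciSup Ordinal.bddAbove_of_small n
  have hs_lt_succ (k : ℕ) : s k < s (k + 1) := ((he 0 _ (hs_lt k)).2).trans_le (he_le 0 k)
  set δ := ⨆ k, s k
  have hs_lt_δ (k : ℕ) : s k < δ :=
    (hs_lt_succ k).trans_le (le_ciSup Ordinal.bddAbove_of_small (k + 1))
  have hδ : δ < omega1 := iSup_nat_lt_omega1 hs_lt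
  have hαδ : α < δ := hs_lt_δ 0
  refine ⟨δ, mem_iInter.2 fun n => (hC n).2.1 δ hδ (zero_le.trans_lt hαδ).ne' ?_, hαδ⟩
  refine sSup_inter_Iio_eq_of_cofinal fun γ hγ => ?_
  obtain ⟨k, hk⟩ := (lt_ciSup_iff Ordinal.bddAbove_of_small).1 hγ
  obtain ⟨hmem, hlt⟩ := he n _ (hs_lt k)
  exact ⟨e n (s k), hmem, hk.trans hlt, (he_le n k).trans_lt (hs_lt_δ _)⟩

lemma IsClub'.iInter {C : ℕ → Set Ordinal} (hC : ∀ n, IsClub' (C n)) : IsClub' (⋂ n, C n) :=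
  ⟨(iInter_subset _ 0).trans (hC 0).1,
    fun δ hδ hδ0 hsup => mem_iInter.2 fun n =>
      (hC n).2.1 δ hδ hδ0 (sSup_inter_Iio_mono (iInter_subset _ n) hsup),
    fun _ hα => exists_mem_iInter_gt hC hα⟩

lemma Measuring.iInter (hM : Measuring) (A : ℕ → Ordinal → Set Ordinal)
    (hA : ∀ n δ, δ < omega1 → Order.IsSuccLimit δ → A n δ ⊆ Iio δ ∧ IsClosedIn (A n δ) δ) :
    ∃ C, IsClub' C ∧ ∀ δ ∈ C, Order.IsSuccLimit δ → ∀ n, Measures C (A n δ) δ := by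
  choose C hC hCA using fun n => hM (A n) (hA n)
  exact ⟨⋂ n, C n, IsClub'.iInter hC, fun δ hδ hlim n =>
    Measures.mono (hCA n δ (mem_iInter.1 hδ n) hlim) (iInter_subset _ n)⟩

theorem stmt9 : Measuring ↔ MeasuringCtble := by
  constructor
  · intro hM 𝒜 h𝒜
    -- `∅` is added so that every family is nonempty, hence the range of a sequence.
    have hF (δ : Ordinal) : ∃ F : ℕ → Set Ordinal, δ < omega1 → Order.IsSuccLimit δ →
        range F = insert ∅ (𝒜 δ) := by
      by_cases h : δ < omega1 ∧ Order.IsSuccLimit δ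
      · obtain ⟨F, hF⟩ := ((h𝒜 δ h.1 h.2).1.insert ∅).exists_eq_range (insert_nonempty _ _)
        exact ⟨F, fun _ _ => hF.symm⟩
      · exact ⟨fun _ => ∅, fun h1 h2 => absurd ⟨h1, h2⟩ h⟩
    choose F hF using hF
    obtain ⟨C, hC, hCF⟩ := hM.iInter (fun n δ => F δ n) fun n δ hδ hlim => by
      rcases (hF δ hδ hlim ▸ mem_range_self n : F δ n ∈ insert ∅ (𝒜 δ)) with h | h
      · exact h ▸ ⟨empty_subset _, isClosedIn_empty δ⟩
      · exact (h𝒜 δ hδ hlim).2 _ h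
    refine ⟨C, hC, fun δ hδ hlim D hD => ?_⟩
    obtain ⟨n, rfl⟩ : D ∈ range (F δ) := hF δ (hC.1 hδ) hlim ▸ mem_insert_of_mem _ hD
    exact hCF δ hδ hlim n
  · intro hM A hA
    obtain ⟨C, hC, hCA⟩ := hM (fun δ => {A δ}) fun δ hδ hlim =>
      ⟨countable_singleton _, fun _ hD => hD ▸ hA δ hδ hlim⟩
    exact ⟨C, hC, fun δ hδ hlim => hCA δ hδ hlim _ rfl⟩
end
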